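/- Let p be a prime, a ≥ 3, n ≥ 2, and G = SL(n, ℤ/p^aℤ). Let K be the kernel of ψ_{a,a-1} : G → SL(n, ℤ/p^{a-1}ℤ) and L the kernel of ψ_{a,a-2} : G → SL(n, ℤ/p^{a-2}ℤ). Then every element of K commutes with every element of L, and K has no proper supplement in L: if U is a subgroup of G contained in L such that every element of L can be written as k·u with k ∈ K and u ∈ U, then U = L. -/

import Mathlib

/-!
Elements of the kernel of `ψ_{a,b}` are the matrices `1 + p^b B`. As `p^(a-1) p^(a-2) = 0`, the
kernel `K` of `ψ_{a,a-1}` is central in the kernel `L` of `ψ_{a,a-2}`, and `K` has exponent `p`.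
So if `L = K U`, then `U` contains every `p`-th power and every commutator of elements of `L`.
Modulo `p^a`, `(1 + p^(a-2) M)^p = 1 + p^(a-1) M` whenever `(p^(a-2) M)^2 = 0`; for `M = c E_ij`
this puts `1 + p^(a-1) c E_ij` in `U`, and for `M = c (E_ii - E_jj)` (when `a ≥ 4`) the diagonal
ones. When `a = 3` the diagonal ones are instead the commutators of `1 + p c E_ij` and
`1 + p E_ji`. Since `B ↦ 1 + p^(a-1) B` is additive, `U` contains `1 + p^(a-1) B` for every
traceless `B`, and `det (1 + p^(a-1) B) = 1 + p^(a-1) tr B` shows that this is all of `K`.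
Hence `K ≤ U` and `L = K U = U`.
-/

/-- The reduction homomorphism `ψ_{a,b} : SL(n, ℤ/p^aℤ) → SL(n, ℤ/p^bℤ)` for `b ≤ a`. -/
def SLpow (n p a b : ℕ) (h : b ≤ a) :
    Matrix.SpecialLinearGroup (Fin n) (ZMod (p ^ a)) →*
      Matrix.SpecialLinearGroup (Fin n) (ZMod (p ^ b)) :=
  Matrix.SpecialLinearGroup.map (ZMod.castHom (pow_dvd_pow p h) (ZMod (p ^ b)))

open Matrix
open scoped commutatorElement

theorem one_add_pow_of_mul_self_eq_zero {A : Type*} [Semiring A] {N : A} (hN : N * N = 0)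
    (m : ℕ) : (1 + N) ^ m = 1 + m • N := by
  induction m with
  | zero => simp
  | succ m ih =>
    rw [pow_succ, ih, mul_add, mul_one, add_mul, one_mul, smul_mul_assoc, hN, smul_zero,
      add_zero, succ_nsmul, add_assoc]

section CentralSupplement

variable {G : Type*} [Group G] {K L U : Subgroup G}

theorem Subgroup.commutatorElement_mem {H : Subgroup G} {g h : G} (hg : g ∈ H) (hh : h ∈ H) :
    ⁅g, h⁆ ∈ H := by
  rw [commutatorElement_def]
  exact H.mul_mem (H.mul_mem (H.mul_mem hg hh) (H.inv_mem hg)) (H.inv_mem hh)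

theorem pow_mem_of_central_supplement (hKL : ∀ k ∈ K, ∀ g ∈ L, Commute k g) (hUL : U ≤ L)
    (hsup : ∀ g ∈ L, ∃ k ∈ K, ∃ u ∈ U, g = k * u) {m : ℕ} (hK : ∀ k ∈ K, k ^ m = 1)
    {g : G} (hg : g ∈ L) : g ^ m ∈ U := by
  obtain ⟨k, hk, u, hu, rfl⟩ := hsup g hg
  rw [(hKL k hk u (hUL hu)).mul_pow, hK k hk, one_mul]
  exact U.pow_mem hu m

theorem commutatorElement_mem_of_central_supplement (hKL : ∀ k ∈ K, ∀ g ∈ L, Commute k g)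
    (hUL : U ≤ L) (hsup : ∀ g ∈ L, ∃ k ∈ K, ∃ u ∈ U, g = k * u) {x y : G} (hx : x ∈ L)
    (hy : y ∈ L) : ⁅x, y⁆ ∈ U := by
  obtain ⟨k, hk, u, hu, rfl⟩ := hsup x hx
  obtain ⟨k', hk', u', hu', rfl⟩ := hsup y hy
  have huL : u ∈ L := hUL hu
  have huL' : u' ∈ L := hUL hu'
  have hcentral : ⁅k * u, k' * u'⁆ = ⁅u, u'⁆ := calc
    ⁅k * u, k' * u'⁆ = ⁅u, k' * u'⁆ := by
        rw [commutatorElement_mul_left_eq_conj_mul,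
          commutatorElement_eq_one_iff_commute.mpr (hKL k hk _ hy), mul_one,
          (hKL k hk _ (L.commutatorElement_mem huL hy)).eq, mul_inv_cancel_right]
    _ = ⁅u, u'⁆ := by
        rw [commutatorElement_mul_right_eq_mul_conj,
          commutatorElement_eq_one_iff_commute.mpr (hKL k' hk' u huL).symm, one_mul,
          (hKL k' hk' _ (L.commutatorElement_mem huL huL')).eq, mul_inv_cancel_right]
  rw [hcentral]
  exact U.commutatorElement_mem hu hu'

end CentralSupplement

section MatrixLemmas

variable {ι R : Type*} [Fintype ι] [DecidableEq ι] [CommRing R]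

theorem Matrix.commute_one_add_smul {ε δ : R} (h : ε * δ = 0) (X Y : Matrix ι ι R) :
    Commute (1 + ε • X) (1 + δ • Y) := by
  have h' : δ * ε = 0 := by rw [mul_comm, h]
  simp only [Commute, SemiconjBy, add_mul, mul_add, one_mul, mul_one, smul_mul_smul_comm, h, h',
    zero_smul, add_zero]
  abel

theorem Matrix.one_add_smul_pow_of_mul_self_eq_zero {ε : R} {M : Matrix ι ι R}
    (h : ε • M * ε • M = 0) (m : ℕ) : (1 + ε • M) ^ m = 1 + (m * ε) • M := by
  rw [one_add_pow_of_mul_self_eq_zero h, ← Nat.cast_smul_eq_nsmul R, smul_smul]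

theorem Matrix.transvection_mul_transvection_eq_mul_swap {i j : ι} (hij : i ≠ j) {s t : R}
    (hs : s * s * t = 0) (ht : s * t * t = 0) :
    transvection i j s * transvection j i t =
      (1 + (single i i (s * t) - single j j (s * t))) *
        (transvection j i t * transvection i j s) := by
  have hsts : s * t * s = 0 := by linear_combination hs
  have hstst : s * t * (s * t) = 0 := by linear_combination t * hs
  simp only [transvection, mul_add, mul_one, add_mul, one_mul, single_mul_single_same,
    mul_comm t s, sub_mul, ne_eq, hij, hij.symm, not_false_eq_true, single_mul_single_of_ne, ht,
    hsts, hstst, single_zero, sub_self, add_zero]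
  abel

theorem Matrix.det_one_add_smul_of_mul_self_eq_zero {ε : R} (h : ε * ε = 0) (M : Matrix ι ι R) :
    det (1 + ε • M) = 1 + ε * trace M := by
  rw [det_one_add_smul, sq, h, mul_zero, add_zero, mul_comm]

theorem Matrix.mem_of_trace_eq_zero {R : Type*} [Ring R] [Nonempty ι]
    {S : AddSubmonoid (Matrix ι ι R)} (hoff : ∀ i j, i ≠ j → ∀ c, single i j c ∈ S)
    (hdiag : ∀ i j, i ≠ j → ∀ c, single i i c - single j j c ∈ S) {B : Matrix ι ι R}
    (hB : trace B = 0) : B ∈ S := by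
  obtain ⟨i₀⟩ := ‹Nonempty ι›
  have hsum : B = ∑ i, ∑ j, (single i j (B i j) - if i = j then single i₀ i₀ (B i i) else 0) := by
    simp only [Finset.sum_sub_distrib, Finset.sum_ite_eq, Finset.mem_univ, if_true]
    have h : ∑ i, single i₀ i₀ (B i i) = single i₀ i₀ (trace B) :=
      (map_sum (singleAddMonoidHom i₀ i₀) (fun i => B i i) _).symm
    rw [← matrix_eq_sum_single, h, hB, single_zero, sub_zero]
  rw [hsum]
  refine S.sum_mem fun i _ => S.sum_mem fun j _ => ?_
  by_cases hij : i = j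
  · subst hij
    by_cases hi : i = i₀
    · simp [hi]
    · simpa using hdiag i i₀ hi (B i i)
  · simpa [hij] using hoff i j hij (B i j)

-- Since `ε * ε = 0`, `B ↦ 1 + ε • B` turns sums into products: this is the linearisation of `U`
-- at level `ε`.
def Subgroup.layer (U : Subgroup (Matrix.SpecialLinearGroup ι R)) (ε : R) (hε : ε * ε = 0) :
    AddSubmonoid (Matrix ι ι R) where
  carrier := {B | ∃ u : Matrix.SpecialLinearGroup ι R, u ∈ U ∧ (u : Matrix ι ι R) = 1 + ε • B}
  zero_mem' := ⟨1, U.one_mem, by simp⟩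
  add_mem' := by
    rintro B C ⟨u, hu, hBu⟩ ⟨v, hv, hCv⟩
    refine ⟨u * v, U.mul_mem hu hv, ?_⟩
    rw [Matrix.SpecialLinearGroup.coe_mul, hBu, hCv, add_mul, one_mul, mul_add, mul_one,
      smul_mul_smul_comm, hε, zero_smul, add_zero, smul_add]
    abel

theorem Matrix.SpecialLinearGroup.coe_commutatorElement_of_mul_eq
    {x y : Matrix.SpecialLinearGroup ι R} {Z : Matrix ι ι R}
    (h : (x : Matrix ι ι R) * y = Z * (y * x)) :
    ((⁅x, y⁆ : Matrix.SpecialLinearGroup ι R) : Matrix ι ι R) = Z := by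
  have hxy : ⁅x, y⁆ = x * y * (y * x)⁻¹ := by group
  rw [hxy, coe_mul, coe_mul, h, ← coe_mul y x, mul_assoc, ← coe_mul, mul_inv_cancel, coe_one,
    mul_one]

end MatrixLemmas

theorem ZMod.castHom_eq_zero_iff {m n : ℕ} (h : m ∣ n) (y : ZMod n) :
    ZMod.castHom h (ZMod m) y = 0 ↔ ∃ z : ZMod n, y = m * z := by
  obtain ⟨y, rfl⟩ := ZMod.intCast_surjective y
  rw [map_intCast, ZMod.intCast_zmod_eq_zero_iff_dvd]
  constructor
  · rintro ⟨z, rfl⟩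
    exact ⟨z, by push_cast; rfl⟩
  · rintro ⟨z, hz⟩
    obtain ⟨w, rfl⟩ := ZMod.intCast_surjective z
    rw [← Int.cast_natCast, ← Int.cast_mul, ZMod.intCast_eq_intCast_iff_dvd_sub] at hz
    exact (dvd_sub_right (dvd_mul_right _ w)).mp ((Int.natCast_dvd_natCast.mpr h).trans hz)

theorem mem_ker_SLpow_iff {n p a b : ℕ} (h : b ≤ a)
    (g : Matrix.SpecialLinearGroup (Fin n) (ZMod (p ^ a))) :
    g ∈ (SLpow n p a b h).ker ↔
      ∃ B : Matrix (Fin n) (Fin n) (ZMod (p ^ a)),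
        (g : Matrix (Fin n) (Fin n) (ZMod (p ^ a))) = 1 + (p : ZMod (p ^ a)) ^ b • B := by
  have key : g ∈ (SLpow n p a b h).ker ↔ ∀ i j, ZMod.castHom (pow_dvd_pow p h) (ZMod (p ^ b))
      (((g : Matrix (Fin n) (Fin n) (ZMod (p ^ a))) - 1) i j) = 0 := by
    rw [MonoidHom.mem_ker, Matrix.SpecialLinearGroup.ext_iff]
    simp only [SLpow, Matrix.SpecialLinearGroup.map_apply_coe, RingHom.mapMatrix_apply, map_apply,
      Matrix.sub_apply, map_sub, Matrix.SpecialLinearGroup.coe_one, Matrix.one_apply, apply_ite,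
      map_one, map_zero]
    refine forall₂_congr fun i j => ?_
    split_ifs <;> rw [sub_eq_zero]
  simp_rw [key, ZMod.castHom_eq_zero_iff, Nat.cast_pow]
  constructor
  · intro hg
    choose B hB using hg
    refine ⟨Matrix.of B, ?_⟩
    ext i j
    simp [← hB]
  · rintro ⟨B, hB⟩ i j
    exact ⟨B i j, by simp [hB]⟩

section Congruence

variable {n p a : ℕ}

theorem commute_of_mem_ker_SLpow {b c : ℕ} {hb : b ≤ a} {hc : c ≤ a} (hbc : a ≤ b + c)
    {k g : Matrix.SpecialLinearGroup (Fin n) (ZMod (p ^ a))} (hk : k ∈ (SLpow n p a b hb).ker)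
    (hg : g ∈ (SLpow n p a c hc).ker) : Commute k g := by
  obtain ⟨B, hB⟩ := (mem_ker_SLpow_iff hb k).mp hk
  obtain ⟨C, hC⟩ := (mem_ker_SLpow_iff hc g).mp hg
  have hBC := Matrix.commute_one_add_smul
    (by rw [← pow_add]; exact ZMod.natCast_pow_eq_zero_of_le p hbc) B C
  refine Subtype.ext ?_
  rw [Matrix.SpecialLinearGroup.coe_mul, Matrix.SpecialLinearGroup.coe_mul, hB, hC]
  exact hBC.eq

theorem natCast_pow_pred_mul_self_eq_zero (ha : 2 ≤ a) :
    (p : ZMod (p ^ a)) ^ (a - 1) * (p : ZMod (p ^ a)) ^ (a - 1) = 0 := by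
  rw [← pow_add]
  exact ZMod.natCast_pow_eq_zero_of_le p (by omega)

theorem pow_eq_one_of_mem_ker_SLpow_pred (ha : 2 ≤ a)
    {k : Matrix.SpecialLinearGroup (Fin n) (ZMod (p ^ a))}
    (hk : k ∈ (SLpow n p a (a - 1) (Nat.sub_le a 1)).ker) : k ^ p = 1 := by
  obtain ⟨B, hB⟩ := (mem_ker_SLpow_iff _ k).mp hk
  have hsq : (p : ZMod (p ^ a)) ^ (a - 1) • B * (p : ZMod (p ^ a)) ^ (a - 1) • B = 0 := by
    rw [smul_mul_smul_comm, natCast_pow_pred_mul_self_eq_zero ha, zero_smul]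
  refine Subtype.ext ?_
  rw [Matrix.SpecialLinearGroup.coe_pow, hB, Matrix.one_add_smul_pow_of_mul_self_eq_zero hsq,
    ← pow_succ', Nat.sub_add_cancel (by omega), ZMod.natCast_pow_eq_zero_of_le p le_rfl,
    zero_smul, add_zero, Matrix.SpecialLinearGroup.coe_one]

variable {U : Subgroup (Matrix.SpecialLinearGroup (Fin n) (ZMod (p ^ a)))}

theorem mem_layer_of_pow_mem (ha : 2 ≤ a)
    (hpow : ∀ g ∈ (SLpow n p a (a - 2) (Nat.sub_le a 2)).ker, g ^ p ∈ U)
    {M : Matrix (Fin n) (Fin n) (ZMod (p ^ a))}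
    (hdet : det (1 + (p : ZMod (p ^ a)) ^ (a - 2) • M) = 1)
    (hsq : (p : ZMod (p ^ a)) ^ (a - 2) • M * (p : ZMod (p ^ a)) ^ (a - 2) • M = 0) :
    M ∈ U.layer _ (natCast_pow_pred_mul_self_eq_zero ha) := by
  let x : Matrix.SpecialLinearGroup (Fin n) (ZMod (p ^ a)) := ⟨_, hdet⟩
  refine ⟨x ^ p, hpow x ((mem_ker_SLpow_iff _ x).mpr ⟨M, rfl⟩), ?_⟩
  rw [Matrix.SpecialLinearGroup.coe_pow, Matrix.one_add_smul_pow_of_mul_self_eq_zero hsq,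
    ← pow_succ', show a - 2 + 1 = a - 1 by omega]

theorem single_mem_layer (ha : 3 ≤ a)
    (hpow : ∀ g ∈ (SLpow n p a (a - 2) (Nat.sub_le a 2)).ker, g ^ p ∈ U)
    {i j : Fin n} (hij : i ≠ j) (c : ZMod (p ^ a)) :
    single i j c ∈ U.layer _ (natCast_pow_pred_mul_self_eq_zero (by omega)) := by
  refine mem_layer_of_pow_mem (by omega) hpow ?_ ?_
  · rw [smul_single, ← transvection, det_transvection_of_ne i j hij]
  · rw [smul_single]
    exact single_mul_single_of_ne _ _ _ _ hij.symm _

theorem single_sub_single_mem_layer_of_four_le (ha : 4 ≤ a)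
    (hpow : ∀ g ∈ (SLpow n p a (a - 2) (Nat.sub_le a 2)).ker, g ^ p ∈ U)
    (i j : Fin n) (c : ZMod (p ^ a)) :
    single i i c - single j j c ∈ U.layer _ (natCast_pow_pred_mul_self_eq_zero (by omega)) := by
  have hq : (p : ZMod (p ^ a)) ^ (a - 2) * (p : ZMod (p ^ a)) ^ (a - 2) = 0 := by
    rw [← pow_add]
    exact ZMod.natCast_pow_eq_zero_of_le p (by omega)
  refine mem_layer_of_pow_mem (by omega) hpow ?_ ?_
  · rw [det_one_add_smul_of_mul_self_eq_zero hq, trace_sub, trace_single_eq_same,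
      trace_single_eq_same, sub_self, mul_zero, add_zero]
  · rw [smul_mul_smul_comm, hq, zero_smul]

theorem single_sub_single_mem_layer_of_eq_three
    {U : Subgroup (Matrix.SpecialLinearGroup (Fin n) (ZMod (p ^ 3)))}
    (hcomm : ∀ x ∈ (SLpow n p 3 1 (by norm_num)).ker, ∀ y ∈ (SLpow n p 3 1 (by norm_num)).ker,
      ⁅x, y⁆ ∈ U)
    {i j : Fin n} (hij : i ≠ j) (c : ZMod (p ^ 3)) :
    single i i c - single j j c ∈ U.layer ((p : ZMod (p ^ 3)) ^ 2)
      (natCast_pow_pred_mul_self_eq_zero (a := 3) (by norm_num)) := by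
  have hπ : (p : ZMod (p ^ 3)) ^ 3 = 0 := ZMod.natCast_pow_eq_zero_of_le p le_rfl
  let x : Matrix.SpecialLinearGroup (Fin n) (ZMod (p ^ 3)) :=
    ⟨transvection i j (p * c), det_transvection_of_ne i j hij _⟩
  let y : Matrix.SpecialLinearGroup (Fin n) (ZMod (p ^ 3)) :=
    ⟨transvection j i p, det_transvection_of_ne j i hij.symm _⟩
  have hx : x ∈ (SLpow n p 3 1 (by norm_num)).ker :=
    (mem_ker_SLpow_iff _ x).mpr ⟨single i j c, by rw [pow_one, smul_single]; rfl⟩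
  have hy : y ∈ (SLpow n p 3 1 (by norm_num)).ker :=
    (mem_ker_SLpow_iff _ y).mpr
      ⟨single j i 1, by rw [pow_one, smul_single, smul_eq_mul, mul_one]; rfl⟩
  refine ⟨⁅x, y⁆, hcomm x hx y hy, Matrix.SpecialLinearGroup.coe_commutatorElement_of_mul_eq ?_⟩
  change transvection i j (p * c) * transvection j i (p : ZMod (p ^ 3)) =
    _ * (transvection j i (p : ZMod (p ^ 3)) * transvection i j (p * c))
  rw [transvection_mul_transvection_eq_mul_swap hij (by linear_combination c ^ 2 * hπ)
    (by linear_combination c * hπ), smul_sub, smul_single, smul_single, smul_eq_mul,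
    show (p : ZMod (p ^ 3)) * c * p = p ^ 2 * c by ring]

theorem ker_SLpow_pred_le [NeZero n] (ha : 2 ≤ a)
    (hoff : ∀ i j : Fin n, i ≠ j → ∀ c,
      single i j c ∈ U.layer _ (natCast_pow_pred_mul_self_eq_zero ha))
    (hdiag : ∀ i j : Fin n, i ≠ j → ∀ c,
      single i i c - single j j c ∈ U.layer _ (natCast_pow_pred_mul_self_eq_zero ha)) :
    (SLpow n p a (a - 1) (Nat.sub_le a 1)).ker ≤ U := by
  intro k hk
  obtain ⟨B, hB⟩ := (mem_ker_SLpow_iff _ k).mp hk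
  have htrace : (p : ZMod (p ^ a)) ^ (a - 1) * trace B = 0 := by
    have hdet := k.prop
    rw [hB, det_one_add_smul_of_mul_self_eq_zero (natCast_pow_pred_mul_self_eq_zero ha)] at hdet
    linear_combination hdet
  obtain ⟨u, hu, huB⟩ := mem_of_trace_eq_zero hoff hdiag (B := B - single 0 0 (trace B))
    (by rw [trace_sub, trace_single_eq_same, sub_self])
  have hku : k = u := by
    refine Subtype.ext ?_
    rw [hB, huB, smul_sub, smul_single, smul_eq_mul, htrace, single_zero, sub_zero]
  exact hku ▸ hu

end Congruence

theorem stmt4_general (p : ℕ) (a : ℕ) (ha : 3 ≤ a) (n : ℕ) (hn : 2 ≤ n) :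
    (∀ k ∈ (SLpow n p a (a - 1) (Nat.sub_le a 1)).ker,
      ∀ g ∈ (SLpow n p a (a - 2) (Nat.sub_le a 2)).ker, k * g = g * k) ∧
    (∀ U : Subgroup (Matrix.SpecialLinearGroup (Fin n) (ZMod (p ^ a))),
      U ≤ (SLpow n p a (a - 2) (Nat.sub_le a 2)).ker →
      (∀ g ∈ (SLpow n p a (a - 2) (Nat.sub_le a 2)).ker,
        ∃ k ∈ (SLpow n p a (a - 1) (Nat.sub_le a 1)).ker, ∃ u ∈ U, g = k * u) →
      U = (SLpow n p a (a - 2) (Nat.sub_le a 2)).ker) := by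
  have hKL : ∀ k ∈ (SLpow n p a (a - 1) (Nat.sub_le a 1)).ker,
      ∀ g ∈ (SLpow n p a (a - 2) (Nat.sub_le a 2)).ker, Commute k g :=
    fun k hk g hg => commute_of_mem_ker_SLpow (by omega) hk hg
  refine ⟨fun k hk g hg => (hKL k hk g hg).eq, fun U hUL hsup => le_antisymm hUL fun g hg => ?_⟩
  have hpow := fun g (hg : g ∈ (SLpow n p a (a - 2) (Nat.sub_le a 2)).ker) =>
    pow_mem_of_central_supplement hKL hUL hsup
      (fun k hk => pow_eq_one_of_mem_ker_SLpow_pred (by omega) hk) hg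
  have : NeZero n := ⟨by omega⟩
  have hK : (SLpow n p a (a - 1) (Nat.sub_le a 1)).ker ≤ U := by
    refine ker_SLpow_pred_le (by omega) (fun i j hij => single_mem_layer ha hpow hij) ?_
    rcases ha.eq_or_lt with rfl | h4
    · exact fun i j hij => single_sub_single_mem_layer_of_eq_three
        (fun x hx y hy => commutatorElement_mem_of_central_supplement hKL hUL hsup hx hy) hij
    · exact fun i j _ => single_sub_single_mem_layer_of_four_le h4 hpow i j
  obtain ⟨k, hk, u, hu, rfl⟩ := hsup g hg
  exact U.mul_mem (hK hk) hu

/-- For `a ≥ 3`, the kernel `K` of `ψ_{a,a-1}` centralizes the kernel `L` of `ψ_{a,a-2}`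
and has no proper supplement in `L`. -/
theorem stmt4 (p : ℕ) (hp : p.Prime) (a : ℕ) (ha : 3 ≤ a) (n : ℕ) (hn : 2 ≤ n) :
    (∀ k ∈ (SLpow n p a (a - 1) (Nat.sub_le a 1)).ker,
      ∀ g ∈ (SLpow n p a (a - 2) (Nat.sub_le a 2)).ker, k * g = g * k) ∧
    (∀ U : Subgroup (Matrix.SpecialLinearGroup (Fin n) (ZMod (p ^ a))),
      U ≤ (SLpow n p a (a - 2) (Nat.sub_le a 2)).ker →
      (∀ g ∈ (SLpow n p a (a - 2) (Nat.sub_le a 2)).ker,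
        ∃ k ∈ (SLpow n p a (a - 1) (Nat.sub_le a 1)).ker, ∃ u ∈ U, g = k * u) →
      U = (SLpow n p a (a - 2) (Nat.sub_le a 2)).ker) :=
  stmt4_general p a ha n hn
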